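/- arXiv:1208.1036 — 2 statements merged into one kernel-verified Lean document; each statement's English description precedes it below -/
import Mathlib

section
/- Let A and B be n×n nonnegative irreducible real matrices, and for t ∈ [0,1] let A^{(1−t)} ∘ B^{(t)} denote the n×n matrix with entries (A_{ij})^{1−t} (B_{ij})^{t}. Then for all t ∈ [0,1], r(A^{(1−t)} ∘ B^{(t)}) ≤ r(A)^{1−t} · r(B)^{t}. -/
open Matrix

/-- Spectral radius of a real square matrix: the maximum modulus of its complex
eigenvalues. -/
noncomputable def specRad {n : ℕ} (A : Matrix (Fin n) (Fin n) ℝ) : ℝ :=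
  sSup {x : ℝ | ∃ μ ∈ spectrum ℂ (A.map Complex.ofReal), x = ‖μ‖}

/-- A nonnegative matrix is irreducible if for every pair (i,j) some power has a
positive (i,j) entry. -/
def MatIrred {n : ℕ} (A : Matrix (Fin n) (Fin n) ℝ) : Prop :=
  ∀ i j : Fin n, ∃ m : ℕ, 0 < m ∧ 0 < (A ^ m) i j

/-- For a real diagonal matrix D = diag d, `expDiag d` is diag (exp d). -/
noncomputable def expDiag {n : ℕ} (d : Fin n → ℝ) : Matrix (Fin n) (Fin n) ℝ :=
  Matrix.diagonal fun i => Real.exp (d i)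

/-- Property 1: equality in the log-convexity inequality forces C - D to be scalar. -/
def Property1 {n : ℕ} (A : Matrix (Fin n) (Fin n) ℝ) : Prop :=
  ∀ C D : Fin n → ℝ, ∀ t ∈ Set.Ioo (0:ℝ) 1,
    Real.log (specRad (expDiag (fun i => (1 - t) * C i + t * D i) * A)) =
      (1 - t) * Real.log (specRad (expDiag C * A)) +
        t * Real.log (specRad (expDiag D * A)) →
    ∃ c : ℝ, ∀ i, C i - D i = c

/-!
By Gelfand's formula, `r(M) = lim ‖M ^ k‖ ^ (1 / k)` for the max-row-sum norm. Writing
`C = A^{(1-t)} ∘ B^{(t)}`, Hölder's inequality with exponents `1 / (1 - t)` and `1 / t` gives, by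
induction on `k`, the entrywise bound `(C ^ k) i j ≤ (A ^ k) i j ^ (1 - t) * (B ^ k) i j ^ t`, and
applied once more to row sums it gives `‖C ^ k‖ ≤ ‖A ^ k‖ ^ (1 - t) * ‖B ^ k‖ ^ t`. Taking `k`-th
roots and letting `k → ∞` yields `r(C) ≤ r(A) ^ (1 - t) * r(B) ^ t`.
-/

open Filter Finset Topology

theorem Real.sum_rpow_one_sub_mul_rpow_le {ι : Type*} (s : Finset ι) {f g : ι → ℝ}
    (hf : ∀ i ∈ s, 0 ≤ f i) (hg : ∀ i ∈ s, 0 ≤ g i) {t : ℝ} (ht : t ∈ Set.Icc (0 : ℝ) 1) :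
    ∑ i ∈ s, f i ^ (1 - t) * g i ^ t ≤ (∑ i ∈ s, f i) ^ (1 - t) * (∑ i ∈ s, g i) ^ t := by
  rcases ht.1.eq_or_lt with rfl | ht₀
  · simp
  rcases ht.2.eq_or_lt with rfl | ht₁
  · simp
  have hpq : (1 - t)⁻¹.HolderConjugate t⁻¹ := .one_sub_inv_inv ht₀ ht₁
  have cancel : ∀ {a : ℝ} {x : ℝ}, 0 < a → 0 ≤ x → (x ^ a) ^ a⁻¹ = x := fun ha hx => by
    rw [← Real.rpow_mul hx, mul_inv_cancel₀ ha.ne', Real.rpow_one]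
  have h := Real.inner_le_Lp_mul_Lq_of_nonneg s hpq
    (fun i hi => Real.rpow_nonneg (hf i hi) (1 - t)) (fun i hi => Real.rpow_nonneg (hg i hi) t)
  simp only [one_div, inv_inv] at h
  rwa [sum_congr rfl fun i hi => cancel (sub_pos.2 ht₁) (hf i hi),
    sum_congr rfl fun i hi => cancel ht₀ (hg i hi)] at h

attribute [local instance] Matrix.linftyOpSeminormedAddCommGroup Matrix.linftyOpNormedRing
  Matrix.linftyOpNormedAlgebra

namespace Matrix

section LinftyNorm

variable {m n α : Type*} [Fintype m] [Fintype n] [SeminormedAddCommGroup α]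

theorem sum_norm_le_linfty_opNorm (A : Matrix m n α) (i : m) : ∑ j, ‖A i j‖ ≤ ‖A‖ := by
  rw [linfty_opNorm_def]
  simpa using NNReal.coe_le_coe.2 (le_sup (f := fun i => ∑ j, ‖A i j‖₊) (mem_univ i))

theorem linfty_opNorm_le_of_sum_norm_le {A : Matrix m n α} {c : ℝ} (hc : 0 ≤ c)
    (h : ∀ i, ∑ j, ‖A i j‖ ≤ c) : ‖A‖ ≤ c := by
  lift c to NNReal using hc
  rw [linfty_opNorm_def]
  refine NNReal.coe_le_coe.2 (Finset.sup_le fun i _ => ?_)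
  simpa [← NNReal.coe_le_coe] using h i

theorem linfty_opNorm_le_rpow_mul_rpow {A B C : Matrix m n α} {t : ℝ}
    (ht : t ∈ Set.Icc (0 : ℝ) 1) (h : ∀ i j, ‖C i j‖ ≤ ‖A i j‖ ^ (1 - t) * ‖B i j‖ ^ t) :
    ‖C‖ ≤ ‖A‖ ^ (1 - t) * ‖B‖ ^ t := by
  refine linfty_opNorm_le_of_sum_norm_le (by positivity) fun i => ?_
  calc ∑ j, ‖C i j‖ ≤ ∑ j, ‖A i j‖ ^ (1 - t) * ‖B i j‖ ^ t := sum_le_sum fun j _ => h i j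
    _ ≤ (∑ j, ‖A i j‖) ^ (1 - t) * (∑ j, ‖B i j‖) ^ t :=
      Real.sum_rpow_one_sub_mul_rpow_le _ (fun _ _ => norm_nonneg _) (fun _ _ => norm_nonneg _) ht
    _ ≤ ‖A‖ ^ (1 - t) * ‖B‖ ^ t := by
      gcongr
      · linarith [ht.2]
      · exact sum_norm_le_linfty_opNorm A i
      · exact ht.1
      · exact sum_norm_le_linfty_opNorm B i

end LinftyNorm

@[simp]
theorem linfty_opNorm_map_ofReal {m n : Type*} [Fintype m] [Fintype n] (A : Matrix m n ℝ) :
    ‖A.map Complex.ofReal‖ = ‖A‖ := by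
  simp [linfty_opNorm_def]

theorem map_ofReal_pow {n : Type*} [Fintype n] [DecidableEq n] (A : Matrix n n ℝ) (k : ℕ) :
    A.map Complex.ofReal ^ k = (A ^ k).map Complex.ofReal :=
  (Matrix.map_pow A Complex.ofRealHom k).symm

section LogConvexComb

noncomputable def logConvexComb {m n : Type*} (A B : Matrix m n ℝ) (t : ℝ) : Matrix m n ℝ :=
  of fun i j => A i j ^ (1 - t) * B i j ^ t

theorem logConvexComb_nonneg {m n : Type*} {A B : Matrix m n ℝ} {t : ℝ} (hA : ∀ i j, 0 ≤ A i j)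
    (hB : ∀ i j, 0 ≤ B i j) (i : m) (j : n) :
    0 ≤ logConvexComb A B t i j :=
  mul_nonneg (Real.rpow_nonneg (hA i j) _) (Real.rpow_nonneg (hB i j) _)

variable {n : Type*} [Fintype n] [DecidableEq n] {A B : Matrix n n ℝ} {t : ℝ}

theorem logConvexComb_pow_apply_le (hA : ∀ i j, 0 ≤ A i j) (hB : ∀ i j, 0 ≤ B i j)
    (ht : t ∈ Set.Icc (0 : ℝ) 1) (k : ℕ) (i j : n) :
    (logConvexComb A B t ^ k) i j ≤ (A ^ k) i j ^ (1 - t) * (B ^ k) i j ^ t := by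
  induction k generalizing j with
  | zero =>
    rcases eq_or_ne i j with rfl | hij
    · simp
    · simp only [pow_zero, one_apply_ne hij]
      positivity
  | succ k ih =>
    have hAk := pow_apply_nonneg hA k i
    have hBk := pow_apply_nonneg hB k i
    simp only [pow_succ, mul_apply]
    calc ∑ l, (logConvexComb A B t ^ k) i l * logConvexComb A B t l j
        ≤ ∑ l, ((A ^ k) i l ^ (1 - t) * (B ^ k) i l ^ t) * (A l j ^ (1 - t) * B l j ^ t) :=
          sum_le_sum fun l _ => mul_le_mul_of_nonneg_right (ih l) (logConvexComb_nonneg hA hB l j)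
      _ = ∑ l, ((A ^ k) i l * A l j) ^ (1 - t) * ((B ^ k) i l * B l j) ^ t := by
          refine sum_congr rfl fun l _ => ?_
          rw [Real.mul_rpow (hAk l) (hA l j), Real.mul_rpow (hBk l) (hB l j)]
          ring
      _ ≤ (∑ l, (A ^ k) i l * A l j) ^ (1 - t) * (∑ l, (B ^ k) i l * B l j) ^ t :=
          Real.sum_rpow_one_sub_mul_rpow_le _ (fun l _ => mul_nonneg (hAk l) (hA l j))
            (fun l _ => mul_nonneg (hBk l) (hB l j)) ht

theorem linfty_opNorm_logConvexComb_pow_le (hA : ∀ i j, 0 ≤ A i j) (hB : ∀ i j, 0 ≤ B i j)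
    (ht : t ∈ Set.Icc (0 : ℝ) 1) (k : ℕ) :
    ‖logConvexComb A B t ^ k‖ ≤ ‖A ^ k‖ ^ (1 - t) * ‖B ^ k‖ ^ t := by
  refine linfty_opNorm_le_rpow_mul_rpow ht fun i j => ?_
  rw [Real.norm_of_nonneg (pow_apply_nonneg (logConvexComb_nonneg hA hB) k i j),
    Real.norm_of_nonneg (pow_apply_nonneg hA k i j),
    Real.norm_of_nonneg (pow_apply_nonneg hB k i j)]
  exact logConvexComb_pow_apply_le hA hB ht k i j

end LogConvexComb

end Matrix

theorem specRad_nonneg {n : ℕ} (A : Matrix (Fin n) (Fin n) ℝ) : 0 ≤ specRad A :=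
  Real.sSup_nonneg fun _ ⟨μ, _, hx⟩ => hx ▸ norm_nonneg μ

theorem spectralRadius_map_ofReal {n : ℕ} (A : Matrix (Fin n) (Fin n) ℝ) :
    spectralRadius ℂ (A.map Complex.ofReal) = ENNReal.ofReal (specRad A) := by
  rcases (spectrum ℂ (A.map Complex.ofReal)).eq_empty_or_nonempty with h | h
  · simp [spectralRadius, specRad, h]
  obtain ⟨μ, hμ, hr⟩ := spectrum.exists_nnnorm_eq_spectralRadius_of_nonempty h
  have hmax : IsGreatest {x : ℝ | ∃ ν ∈ spectrum ℂ (A.map Complex.ofReal), x = ‖ν‖} ‖μ‖ := by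
    refine ⟨⟨μ, hμ, rfl⟩, ?_⟩
    rintro _ ⟨ν, hν, rfl⟩
    have : (‖ν‖₊ : ENNReal) ≤ ‖μ‖₊ :=
      hr ▸ le_iSup₂ (f := fun ν (_ : ν ∈ spectrum ℂ _) => (‖ν‖₊ : ENNReal)) ν hν
    exact_mod_cast this
  rw [specRad, hmax.csSup_eq, ← hr]
  exact (ofReal_norm μ).symm

theorem tendsto_linfty_opNorm_pow_rpow_specRad {n : ℕ} (A : Matrix (Fin n) (Fin n) ℝ) :
    Tendsto (fun k : ℕ => ‖A ^ k‖ ^ (1 / k : ℝ)) atTop (𝓝 (specRad A)) := by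
  have h := spectrum.pow_norm_pow_one_div_tendsto_nhds_spectralRadius (A.map Complex.ofReal)
  simp only [Matrix.map_ofReal_pow, Matrix.linfty_opNorm_map_ofReal,
    spectralRadius_map_ofReal] at h
  have h' := (ENNReal.tendsto_toReal ENNReal.ofReal_ne_top).comp h
  simpa [Function.comp_def, specRad_nonneg, Real.rpow_nonneg] using h'

theorem Real.rpow_le_rpow_mul_rpow_of_le_mul {x a b p q s : ℝ} (hx : 0 ≤ x) (ha : 0 ≤ a)
    (hb : 0 ≤ b) (hs : 0 ≤ s) (h : x ≤ a ^ p * b ^ q) : x ^ s ≤ (a ^ s) ^ p * (b ^ s) ^ q := by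
  calc x ^ s ≤ (a ^ p * b ^ q) ^ s := Real.rpow_le_rpow hx h hs
    _ = (a ^ s) ^ p * (b ^ s) ^ q := by
      rw [Real.mul_rpow (by positivity) (by positivity), ← Real.rpow_mul ha, ← Real.rpow_mul hb,
        ← Real.rpow_mul ha, ← Real.rpow_mul hb, mul_comm p, mul_comm q]

theorem stmt2_general {n : ℕ} (A B : Matrix (Fin n) (Fin n) ℝ)
    (hA : ∀ i j, 0 ≤ A i j) (hB : ∀ i j, 0 ≤ B i j)
    (t : ℝ) (ht : t ∈ Set.Icc (0:ℝ) 1) :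
    specRad (Matrix.of fun i j => A i j ^ (1 - t) * B i j ^ t) ≤
      specRad A ^ (1 - t) * specRad B ^ t := by
  have hnorm (k : ℕ) : ‖logConvexComb A B t ^ k‖ ^ (1 / k : ℝ) ≤
      (‖A ^ k‖ ^ (1 / k : ℝ)) ^ (1 - t) * (‖B ^ k‖ ^ (1 / k : ℝ)) ^ t :=
    Real.rpow_le_rpow_mul_rpow_of_le_mul (norm_nonneg _) (norm_nonneg _) (norm_nonneg _)
      (by positivity) (linfty_opNorm_logConvexComb_pow_le hA hB ht k)
  have hlim :=
    ((tendsto_linfty_opNorm_pow_rpow_specRad A).rpow_const (Or.inr (sub_nonneg.2 ht.2))).mul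
      ((tendsto_linfty_opNorm_pow_rpow_specRad B).rpow_const (Or.inr ht.1))
  exact le_of_tendsto_of_tendsto' (tendsto_linfty_opNorm_pow_rpow_specRad _) hlim hnorm

theorem stmt2 {n : ℕ} (A B : Matrix (Fin n) (Fin n) ℝ)
    (hA : ∀ i j, 0 ≤ A i j) (hB : ∀ i j, 0 ≤ B i j)
    (hAirr : MatIrred A) (hBirr : MatIrred B)
    (t : ℝ) (ht : t ∈ Set.Icc (0:ℝ) 1) :
    specRad (Matrix.of fun i j => A i j ^ (1 - t) * B i j ^ t) ≤
      specRad A ^ (1 - t) * specRad B ^ t :=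
  stmt2_general A B hA hB t ht
end

section
/- Let A be an n×n nonnegative irreducible real matrix and let C, D be real diagonal n×n matrices. Then there exists t ∈ (0,1) with log r(e^{(1−t)C + tD} A) = (1−t)·log r(e^{C} A) + t·log r(e^{D} A) if and only if there exist a real number α > 0 and a diagonal matrix E with strictly positive diagonal entries such that e^{D} A = α · E^{−1} e^{C} A E. -/
open Matrix

/-!
Write `P = e^C A`, `Q = e^D A` and `B = e^{(1-t)C+tD} A`, so that entrywise
`B i j = P i j ^ (1-t) * Q i j ^ t`.

An irreducible nonnegative matrix `M` has positive right and left eigenvectors, and their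
eigenvalues agree and equal `r(M)`: taking moduli and pairing with a positive `v` with
`v M = σ v` shows `|μ| ≤ σ` for every complex eigenvalue `μ`. Existence comes from maximising the
Collatz–Wielandt function of `N x` over the simplex, where `N = (1 + M) ^ K` is entrywise positive
and commutes with `M`.

If `Q = α E⁻¹ P E`, then `B = α^t E^{-t} P E^t`, and `E^{-t} u` is a positive eigenvector of `B`
for any Perron vector `u` of `P`, so `r(B) = α^t r(P)` while `r(Q) = α r(P)`.

Conversely, let `u, w` be Perron vectors of `P, Q` and `z = u^(1-t) w^t`. Hölder's inequality
in each row gives `B z ≤ r(P)^(1-t) r(Q)^t z`. When the right side is `r(B) z`, pairing with a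
positive left eigenvector of `B` forces equality in every row, and the equality case of Hölder
makes the rows `(P i j u j)_j` and `(Q i j w j)_j` proportional, i.e. `Q = (r(Q)/r(P)) E⁻¹ P E`
with `E = u / w`.
-/

open Finset

namespace Matrix

lemma mul_apply_le_mul_apply {l m o : Type*} [Fintype m] {A A' : Matrix l m ℝ}
    {B B' : Matrix m o ℝ} (hA : ∀ i k, 0 ≤ A i k) (hB : ∀ k j, 0 ≤ B k j)
    (hAA' : ∀ i k, A i k ≤ A' i k) (hBB' : ∀ k j, B k j ≤ B' k j) (i : l) (j : o) :
    (A * B) i j ≤ (A' * B') i j :=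
  sum_le_sum fun k _ => mul_le_mul (hAA' i k) (hBB' k j) (hB k j) ((hA i k).trans (hAA' i k))

variable {ι : Type*} [Fintype ι]

lemma pow_apply_le_pow_apply [DecidableEq ι] {A B : Matrix ι ι ℝ} (hA : ∀ i j, 0 ≤ A i j)
    (hAB : ∀ i j, A i j ≤ B i j) (m : ℕ) (i j : ι) : (A ^ m) i j ≤ (B ^ m) i j := by
  induction m generalizing i j with
  | zero => rfl
  | succ m ih =>
    rw [pow_succ, pow_succ]
    exact mul_apply_le_mul_apply (pow_apply_nonneg hA m) hA ih hAB i j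

lemma dotProduct_pos_of_pos {v x : ι → ℝ} (hv : ∀ i, 0 < v i) (hx : ∀ i, 0 ≤ x i)
    (hx0 : x ≠ 0) : 0 < v ⬝ᵥ x := by
  obtain ⟨j, hj⟩ := Function.ne_iff.1 hx0
  exact sum_pos' (fun k _ => mul_nonneg (hv k).le (hx k))
    ⟨j, mem_univ j, mul_pos (hv j) ((hx j).lt_of_ne' hj)⟩

lemma mulVec_pos_of_pos {N : Matrix ι ι ℝ} (hN : ∀ i j, 0 < N i j) {x : ι → ℝ}
    (hx : ∀ j, 0 ≤ x j) (hx0 : x ≠ 0) (i : ι) : 0 < (N *ᵥ x) i :=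
  dotProduct_pos_of_pos (hN i) hx hx0

end Matrix

namespace MatIrred

variable {n : ℕ} {M : Matrix (Fin n) (Fin n) ℝ}

lemma exists_pos_one_add_pow (hM : ∀ i j, 0 ≤ M i j) (hirr : MatIrred M) :
    ∃ K : ℕ, ∀ i j, 0 < ((1 + M) ^ K) i j := by
  choose m hm0 hm using hirr
  refine ⟨univ.sup fun p : Fin n × Fin n => m p.1 p.2, fun i j => ?_⟩
  have hmK : m i j ≤ univ.sup fun p : Fin n × Fin n => m p.1 p.2 :=
    le_sup (f := fun p : Fin n × Fin n => m p.1 p.2) (mem_univ (i, j))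
  have h1 : ∀ i j, 0 ≤ (1 : Matrix (Fin n) (Fin n) ℝ) i j := fun i j => by
    rw [Matrix.one_apply]; split_ifs <;> norm_num
  have h1M : ∀ i j, (1 : Matrix (Fin n) (Fin n) ℝ) i j ≤ (1 + M) i j := fun i j =>
    le_add_of_nonneg_right (hM i j)
  have hM1 : ∀ i j, M i j ≤ (1 + M) i j := fun i j => le_add_of_nonneg_left (h1 i j)
  calc 0 < (M ^ m i j * 1 ^ (_ - m i j)) i j := by simpa using hm i j
    _ ≤ ((1 + M) ^ m i j * (1 + M) ^ (_ - m i j)) i j :=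
      Matrix.mul_apply_le_mul_apply (Matrix.pow_apply_nonneg hM _) (Matrix.pow_apply_nonneg h1 _)
        (Matrix.pow_apply_le_pow_apply hM hM1 _) (Matrix.pow_apply_le_pow_apply h1 h1M _) i j
    _ = _ := by rw [← pow_add, Nat.add_sub_cancel' hmK]

lemma diagonal_mul {d : Fin n → ℝ} (hd : ∀ i, 0 < d i) (hM : ∀ i j, 0 ≤ M i j)
    (hirr : MatIrred M) : MatIrred (Matrix.diagonal d * M) := by
  intro i j
  obtain ⟨m, hm0, hm⟩ := hirr i j
  set c := univ.inf' ⟨i, mem_univ i⟩ d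
  have hc : 0 < c := (lt_inf'_iff _).2 fun k _ => hd k
  have hcM : ∀ k l, (c • M) k l ≤ (Matrix.diagonal d * M) k l := fun k l => by
    rw [Matrix.diagonal_mul, Matrix.smul_apply, smul_eq_mul]
    exact mul_le_mul_of_nonneg_right (inf'_le _ (mem_univ k)) (hM k l)
  refine ⟨m, hm0, lt_of_lt_of_le ?_ (Matrix.pow_apply_le_pow_apply (A := c • M)
    (fun k l => mul_nonneg hc.le (hM k l)) hcM m i j)⟩
  rw [smul_pow, Matrix.smul_apply, smul_eq_mul]
  exact mul_pos (pow_pos hc m) hm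

lemma transpose (hirr : MatIrred M) : MatIrred Mᵀ := fun i j => by
  obtain ⟨m, hm0, hm⟩ := hirr j i
  exact ⟨m, hm0, by rwa [← Matrix.transpose_pow]⟩

lemma pos_of_mulVec_eq_smul [NeZero n] (hM : ∀ i j, 0 ≤ M i j) (hirr : MatIrred M)
    {u : Fin n → ℝ} {ρ : ℝ} (hu : ∀ i, 0 < u i) (h : M *ᵥ u = ρ • u) : 0 < ρ := by
  obtain ⟨i, j, hij⟩ : ∃ i j, M i j ≠ 0 := by
    by_contra! h0
    obtain ⟨m, hm0, hm⟩ := hirr 0 0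
    have hM0 : M = 0 := Matrix.ext h0
    rw [hM0, zero_pow hm0.ne'] at hm
    exact hm.false
  have hrow : M i j * u j ≤ ρ * u i := by
    have hi : (M *ᵥ u) i = ρ * u i := by simpa using congrFun h i
    exact hi ▸ single_le_sum (f := fun k => M i k * u k) (fun k _ => mul_nonneg (hM i k) (hu k).le)
      (mem_univ j)
  exact pos_of_mul_pos_left ((mul_pos ((hM i j).lt_of_ne' hij) (hu j)).trans_le hrow) (hu i).le

end MatIrred

namespace Matrix

section CollatzWielandt

variable {ι : Type*} [Fintype ι] [Nonempty ι]

noncomputable def collatzWielandt (M : Matrix ι ι ℝ) (x : ι → ℝ) : ℝ :=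
  univ.inf' univ_nonempty fun i => (M *ᵥ x) i / x i

variable {M : Matrix ι ι ℝ} {x : ι → ℝ} {r : ℝ}

lemma collatzWielandt_mul_le (hx : ∀ i, 0 < x i) (i : ι) :
    collatzWielandt M x * x i ≤ (M *ᵥ x) i :=
  (le_div_iff₀ (hx i)).1 (inf'_le _ (mem_univ i))

lemma lt_collatzWielandt (hx : ∀ i, 0 < x i) (h : ∀ i, r * x i < (M *ᵥ x) i) :
    r < collatzWielandt M x :=
  (lt_inf'_iff _).2 fun i _ => (lt_div_iff₀ (hx i)).2 (h i)

lemma continuousOn_collatzWielandt : ContinuousOn (collatzWielandt M) {x | ∀ i, x i ≠ 0} :=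
  ContinuousOn.finset_inf'_apply _ fun i _ =>
    ((continuous_apply i).comp (continuous_const.matrix_mulVec continuous_id)).continuousOn.div
      (continuous_apply i).continuousOn fun _ hx => hx i

theorem exists_pos_mulVec_eq_smul_of_commute {N : Matrix ι ι ℝ} (hN : ∀ i j, 0 < N i j)
    (hMN : Commute M N) : ∃ ρ : ℝ, ∃ u : ι → ℝ, (∀ i, 0 < u i) ∧ M *ᵥ u = ρ • u := by
  classical
  have hNpos : ∀ x ∈ stdSimplex ℝ ι, ∀ i, 0 < (N *ᵥ x) i := fun x hx =>
    mulVec_pos_of_pos hN hx.1 (by rintro rfl; simpa using hx.2)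
  obtain ⟨x₀, hx₀, hmax⟩ := (isCompact_stdSimplex ℝ ι).exists_isMaxOn
    ⟨_, single_mem_stdSimplex ℝ (Classical.arbitrary ι)⟩
    ((continuousOn_collatzWielandt (M := M)).comp
      (continuous_const.matrix_mulVec continuous_id).continuousOn fun x hx i => (hNpos x hx i).ne')
  set u := N *ᵥ x₀
  set ρ := collatzWielandt M u
  have hu : ∀ i, 0 < u i := hNpos x₀ hx₀
  refine ⟨ρ, u, hu, ?_⟩
  by_contra hne
  have hd : ∀ i, 0 ≤ (M *ᵥ u - ρ • u) i := fun i => by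
    simpa using collatzWielandt_mul_le hu i
  -- `N` commutes with `M`, so it maps the nonzero defect `M u - ρ u ≥ 0` to `M (N u) - ρ N u`
  have hw : ∀ i, ρ * (N *ᵥ u) i < (M *ᵥ (N *ᵥ u)) i := fun i => by
    have := mulVec_pos_of_pos hN hd (sub_ne_zero.2 hne) i
    rwa [mulVec_sub, mulVec_smul, mulVec_mulVec, ← hMN.eq, ← mulVec_mulVec, Pi.sub_apply,
      Pi.smul_apply, smul_eq_mul, sub_pos] at this
  set c := (∑ i, u i)⁻¹
  have hc : 0 < c := inv_pos.2 (sum_pos (fun i _ => hu i) univ_nonempty)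
  have hx₁ : c • u ∈ stdSimplex ℝ ι :=
    ⟨fun i => mul_nonneg hc.le (hu i).le, by simp only [Pi.smul_apply, smul_eq_mul, ← mul_sum, c,
      inv_mul_cancel₀ (sum_pos (fun i _ => hu i) univ_nonempty).ne']⟩
  refine (hmax hx₁).not_gt (lt_collatzWielandt (hNpos _ hx₁) fun i => ?_)
  simp only [mulVec_smul, Pi.smul_apply, smul_eq_mul]
  rw [mul_left_comm]
  exact mul_lt_mul_of_pos_left (hw i) hc

end CollatzWielandt

section Spectrum

variable {ι : Type*} [Fintype ι] {M : Matrix ι ι ℝ} {u v z : ι → ℝ} {ρ σ : ℝ}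

lemma mem_spectrum_iff_exists_mulVec_eq_smul {K : Type*} [Field K] [DecidableEq ι]
    {B : Matrix ι ι K} {μ : K} : μ ∈ spectrum K B ↔ ∃ z ≠ 0, B *ᵥ z = μ • z := by
  rw [← spectrum_toLin', ← Module.End.hasEigenvalue_iff_mem_spectrum]
  constructor
  · intro h
    obtain ⟨z, hz⟩ := h.exists_hasEigenvector
    exact ⟨z, hz.2, by simpa using hz.apply_eq_smul⟩
  · rintro ⟨z, hz, h⟩
    exact Module.End.hasEigenvalue_of_hasEigenvector
      ⟨Module.End.mem_eigenspace_iff.2 (by simpa using h), hz⟩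

lemma ofReal_mem_spectrum_map [DecidableEq ι] (hz : z ≠ 0) (h : M *ᵥ z = ρ • z) :
    (ρ : ℂ) ∈ spectrum ℂ (M.map Complex.ofReal) := by
  refine mem_spectrum_iff_exists_mulVec_eq_smul.2 ⟨fun i => z i, fun h0 => hz ?_, ?_⟩
  · funext i; simpa using congrFun h0 i
  · funext i
    have := congrFun h i
    simp only [mulVec, dotProduct, Pi.smul_apply, smul_eq_mul, map_apply] at this ⊢
    exact_mod_cast this

lemma norm_le_of_mem_spectrum_map [DecidableEq ι] (hM : ∀ i j, 0 ≤ M i j)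
    (hv : ∀ i, 0 < v i) (hvM : v ᵥ* M = σ • v) {μ : ℂ}
    (hμ : μ ∈ spectrum ℂ (M.map Complex.ofReal)) : ‖μ‖ ≤ σ := by
  obtain ⟨z, hz, h⟩ := mem_spectrum_iff_exists_mulVec_eq_smul.1 hμ
  set y : ι → ℝ := fun i => ‖z i‖
  have hrow : ‖μ‖ • y ≤ M *ᵥ y := fun i => calc
    ‖μ‖ * y i = ‖∑ j, (M i j : ℂ) * z j‖ := by
      rw [← norm_mul, ← smul_eq_mul, ← Pi.smul_apply, ← h]; rfl
    _ ≤ ∑ j, ‖(M i j : ℂ) * z j‖ := norm_sum_le _ _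
    _ = (M *ᵥ y) i := by
      simp only [norm_mul, Complex.norm_real, Real.norm_of_nonneg (hM _ _)]; rfl
  have hy : 0 < v ⬝ᵥ y := dotProduct_pos_of_pos hv (fun i => norm_nonneg _) fun hy0 =>
    hz (funext fun i => norm_eq_zero.1 (congrFun hy0 i))
  refine le_of_mul_le_mul_right ?_ hy
  calc ‖μ‖ * (v ⬝ᵥ y) = v ⬝ᵥ (‖μ‖ • y) := by rw [dotProduct_smul, smul_eq_mul]
    _ ≤ v ⬝ᵥ (M *ᵥ y) := dotProduct_le_dotProduct_of_nonneg_left hrow fun i => (hv i).le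
    _ = σ * (v ⬝ᵥ y) := by rw [dotProduct_mulVec, hvM, smul_dotProduct, smul_eq_mul]

lemma eq_of_mulVec_eq_smul_of_vecMul_eq_smul [Nonempty ι] (hu : ∀ i, 0 < u i)
    (hv : ∀ i, 0 < v i) (hMu : M *ᵥ u = ρ • u) (hvM : v ᵥ* M = σ • v) : ρ = σ := by
  have hvu : 0 < v ⬝ᵥ u := dotProduct_pos_of_pos hv (fun i => (hu i).le) fun h0 =>
    (hu (Classical.arbitrary ι)).ne' (congrFun h0 _)
  refine mul_right_cancel₀ hvu.ne' ?_
  rw [← smul_eq_mul, ← dotProduct_smul, ← hMu, dotProduct_mulVec, hvM, smul_dotProduct,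
    smul_eq_mul]

lemma mulVec_eq_smul_of_le_of_vecMul_eq_smul (hv : ∀ i, 0 < v i) (hvM : v ᵥ* M = σ • v)
    (hz : ∀ i, (M *ᵥ z) i ≤ σ * z i) : M *ᵥ z = σ • z := by
  have hsum : ∑ i, v i * (σ * z i - (M *ᵥ z) i) = 0 := by
    have : v ⬝ᵥ (σ • z - M *ᵥ z) = 0 := by
      rw [dotProduct_sub, dotProduct_mulVec, hvM, dotProduct_smul, smul_dotProduct, sub_self]
    simpa [dotProduct] using this
  funext i
  have hi := (sum_eq_zero_iff_of_nonneg fun i _ => mul_nonneg (hv i).le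
    (sub_nonneg.2 (hz i))).1 hsum i (mem_univ i)
  rw [mul_eq_zero, sub_eq_zero] at hi
  exact (hi.resolve_left (hv i).ne').symm

end Spectrum

end Matrix

namespace MatIrred

variable {n : ℕ} [NeZero n] {M : Matrix (Fin n) (Fin n) ℝ} (hM : ∀ i j, 0 ≤ M i j)
  (hirr : MatIrred M)
include hM hirr

theorem exists_pos_mulVec_eq_smul : ∃ ρ : ℝ, ∃ u : Fin n → ℝ, (∀ i, 0 < u i) ∧ M *ᵥ u = ρ • u :=
  have ⟨K, hK⟩ := hirr.exists_pos_one_add_pow hM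
  Matrix.exists_pos_mulVec_eq_smul_of_commute hK
    (((Commute.one_right M).add_right (Commute.refl M)).pow_right K)

theorem specRad_eq_of_mulVec_eq_smul {u : Fin n → ℝ} {ρ : ℝ} (hu : ∀ i, 0 < u i)
    (h : M *ᵥ u = ρ • u) : specRad M = ρ := by
  obtain ⟨σ, v, hv, hvM⟩ := exists_pos_mulVec_eq_smul (M := Mᵀ) (fun i j => hM j i) hirr.transpose
  rw [Matrix.mulVec_transpose] at hvM
  obtain rfl := Matrix.eq_of_mulVec_eq_smul_of_vecMul_eq_smul hu hv h hvM
  have hρ := hirr.pos_of_mulVec_eq_smul hM hu h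
  refine IsGreatest.csSup_eq ⟨⟨ρ, Matrix.ofReal_mem_spectrum_map (fun h0 =>
    (hu 0).ne' (congrFun h0 0)) h, by simp [abs_of_pos hρ]⟩, ?_⟩
  rintro _ ⟨μ, hμ, rfl⟩
  exact Matrix.norm_le_of_mem_spectrum_map hM hv hvM hμ

theorem exists_pos_mulVec_eq_specRad_smul :
    ∃ u : Fin n → ℝ, (∀ i, 0 < u i) ∧ M *ᵥ u = specRad M • u := by
  obtain ⟨ρ, u, hu, h⟩ := exists_pos_mulVec_eq_smul hM hirr
  exact ⟨u, hu, by rw [specRad_eq_of_mulVec_eq_smul hM hirr hu h, h]⟩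

theorem specRad_pos : 0 < specRad M := by
  obtain ⟨u, hu, h⟩ := exists_pos_mulVec_eq_specRad_smul hM hirr
  exact hirr.pos_of_mulVec_eq_smul hM hu h

theorem exists_pos_vecMul_eq_specRad_smul :
    ∃ v : Fin n → ℝ, (∀ i, 0 < v i) ∧ v ᵥ* M = specRad M • v := by
  obtain ⟨u, hu, hMu⟩ := exists_pos_mulVec_eq_specRad_smul hM hirr
  obtain ⟨σ, v, hv, hvM⟩ := exists_pos_mulVec_eq_smul (M := Mᵀ) (fun i j => hM j i) hirr.transpose
  rw [Matrix.mulVec_transpose] at hvM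
  rw [Matrix.eq_of_mulVec_eq_smul_of_vecMul_eq_smul hu hv hMu hvM]
  exact ⟨v, hv, hvM⟩

end MatIrred

section Holder

variable {ι : Type*} [Fintype ι] {a b : ι → ℝ} {s t : ℝ}

lemma Real.rpow_mul_rpow_self_of_add_eq_one {x : ℝ} (hx : 0 ≤ x) (hst : s + t = 1) :
    x ^ s * x ^ t = x := by
  rw [← Real.rpow_add' hx (by rw [hst]; exact one_ne_zero), hst, Real.rpow_one]

lemma Real.rpow_mul_rpow_eq_div {x y A B : ℝ} (hx : 0 ≤ x) (hy : 0 ≤ y) (hA : 0 < A) (hB : 0 < B) :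
    x ^ s * y ^ t = (x / A) ^ s * (y / B) ^ t * (A ^ s * B ^ t) := by
  rw [Real.div_rpow hx hA.le, Real.div_rpow hy hB.le]
  have := (Real.rpow_pos_of_pos hA s).ne'
  have := (Real.rpow_pos_of_pos hB t).ne'
  field_simp

lemma sum_weighted_div_mul (hA : ∑ i, a i ≠ 0) (hB : ∑ i, b i ≠ 0) (hst : s + t = 1) (P : ℝ) :
    ∑ i, (s * (a i / ∑ j, a j) + t * (b i / ∑ j, b j)) * P = P := by
  rw [← sum_mul, sum_add_distrib, ← mul_sum, ← mul_sum, ← sum_div, ← sum_div, div_self hA,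
    div_self hB, mul_one, mul_one, hst, one_mul]

lemma rpow_mul_rpow_le_weighted (ha : ∀ i, 0 ≤ a i) (hb : ∀ i, 0 ≤ b i)
    (hA : 0 < ∑ i, a i) (hB : 0 < ∑ i, b i) (hs : 0 ≤ s) (ht : 0 ≤ t) (hst : s + t = 1) (i : ι) :
    a i ^ s * b i ^ t ≤ (s * (a i / ∑ j, a j) + t * (b i / ∑ j, b j)) *
      ((∑ j, a j) ^ s * (∑ j, b j) ^ t) := by
  rw [Real.rpow_mul_rpow_eq_div (ha i) (hb i) hA hB]
  exact mul_le_mul_of_nonneg_right (Real.geom_mean_le_arith_mean2_weighted hs ht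
    (div_nonneg (ha i) hA.le) (div_nonneg (hb i) hB.le) hst) (by positivity)

theorem sum_rpow_mul_rpow_le (ha : ∀ i, 0 ≤ a i) (hb : ∀ i, 0 ≤ b i)
    (hA : 0 < ∑ i, a i) (hB : 0 < ∑ i, b i) (hs : 0 ≤ s) (ht : 0 ≤ t) (hst : s + t = 1) :
    ∑ i, a i ^ s * b i ^ t ≤ (∑ i, a i) ^ s * (∑ i, b i) ^ t := by
  calc _ ≤ _ := sum_le_sum fun i _ => rpow_mul_rpow_le_weighted ha hb hA hB hs ht hst i
    _ = _ := sum_weighted_div_mul hA.ne' hB.ne' hst _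

theorem mul_sum_eq_mul_sum_of_sum_rpow_mul_rpow_eq (ha : ∀ i, 0 ≤ a i) (hb : ∀ i, 0 ≤ b i)
    (hA : 0 < ∑ i, a i) (hB : 0 < ∑ i, b i) (hs : 0 < s) (ht : 0 < t) (hst : s + t = 1)
    (h : ∑ i, a i ^ s * b i ^ t = (∑ i, a i) ^ s * (∑ i, b i) ^ t) (i : ι) :
    a i * ∑ j, b j = b i * ∑ j, a j := by
  rw [← sum_weighted_div_mul hA.ne' hB.ne' hst ((∑ j, a j) ^ s * (∑ j, b j) ^ t)] at h
  have hi := (sum_eq_sum_iff_of_le fun i _ =>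
    rpow_mul_rpow_le_weighted ha hb hA hB hs.le ht.le hst i).1 h i (mem_univ i)
  rw [Real.rpow_mul_rpow_eq_div (ha i) (hb i) hA hB] at hi
  have := (Real.geom_mean_eq_arith_mean2_weighted_iff_of_pos hs ht (div_nonneg (ha i) hA.le)
    (div_nonneg (hb i) hB.le) hst).1 (mul_right_cancel₀ (by positivity) hi)
  rwa [div_eq_div_iff hA.ne' hB.ne'] at this

end Holder

namespace Matrix

variable {ι : Type*} [Fintype ι] [DecidableEq ι] {P Q : Matrix ι ι ℝ} {s t : ℝ}

noncomputable def weightedGeomMean (s t : ℝ) (P Q : Matrix ι ι ℝ) : Matrix ι ι ℝ :=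
  of fun i j => P i j ^ s * Q i j ^ t

lemma inv_diagonal_mul_mul_diagonal {E : ι → ℝ} (hE : ∀ i, E i ≠ 0) (M : Matrix ι ι ℝ) :
    (diagonal E)⁻¹ * M * diagonal E = of fun i j => (E i)⁻¹ * M i j * E j := by
  have hinv : (diagonal E)⁻¹ = diagonal E⁻¹ := inv_eq_left_inv (by
    rw [diagonal_mul_diagonal, ← diagonal_one]
    exact congrArg diagonal (funext fun i => inv_mul_cancel₀ (hE i)))
  ext i j
  rw [hinv, mul_diagonal, diagonal_mul, of_apply, Pi.inv_apply]

lemma smul_diagonal_conj_mulVec {M : Matrix ι ι ℝ} {E u : ι → ℝ} {α ρ : ℝ} (hE : ∀ i, E i ≠ 0)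
    (h : M *ᵥ u = ρ • u) :
    (α • ((diagonal E)⁻¹ * M * diagonal E)) *ᵥ (fun i => (E i)⁻¹ * u i) =
      (α * ρ) • fun i => (E i)⁻¹ * u i := by
  rw [smul_mulVec, inv_diagonal_mul_mul_diagonal hE]
  funext i
  have hi : ∑ j, M i j * u j = ρ * u i := congrFun h i
  simp only [Pi.smul_apply, smul_eq_mul, mulVec, dotProduct, of_apply]
  calc α * ∑ j, (E i)⁻¹ * M i j * E j * ((E j)⁻¹ * u j) = α * ((E i)⁻¹ * ∑ j, M i j * u j) := by
        simp only [Finset.mul_sum]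
        exact sum_congr rfl fun j _ => by field_simp [hE j]
    _ = α * ρ * ((E i)⁻¹ * u i) := by rw [hi]; ring

lemma weightedGeomMean_smul_diagonal_conj (hP : ∀ i j, 0 ≤ P i j) (hst : s + t = 1) {α : ℝ}
    {E : ι → ℝ} (hα : 0 < α) (hE : ∀ i, 0 < E i) :
    weightedGeomMean s t P (α • ((diagonal E)⁻¹ * P * diagonal E)) =
      α ^ t • ((diagonal fun i => E i ^ t)⁻¹ * P * diagonal fun i => E i ^ t) := by
  ext i j
  rw [inv_diagonal_mul_mul_diagonal (fun i => (hE i).ne'),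
    inv_diagonal_mul_mul_diagonal (fun i => (Real.rpow_pos_of_pos (hE i) t).ne')]
  simp only [weightedGeomMean, smul_apply, of_apply, smul_eq_mul]
  have hEP : 0 ≤ (E i)⁻¹ * P i j := mul_nonneg (inv_nonneg.2 (hE i).le) (hP i j)
  rw [Real.mul_rpow hα.le (mul_nonneg hEP (hE j).le), Real.mul_rpow hEP (hE j).le,
    Real.mul_rpow (inv_nonneg.2 (hE i).le) (hP i j), Real.inv_rpow (hE i).le]
  linear_combination (α ^ t * (E i ^ t)⁻¹ * E j ^ t) *
    Real.rpow_mul_rpow_self_of_add_eq_one (hP i j) hst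

theorem eq_smul_diagonal_conj_of_vecMul_weightedGeomMean (hP : ∀ i j, 0 ≤ P i j)
    (hQ : ∀ i j, 0 ≤ Q i j) (hs : 0 < s) (ht : 0 < t) (hst : s + t = 1) {u w v : ι → ℝ}
    {ρ σ : ℝ} (hρ : 0 < ρ) (hσ : 0 < σ) (hu : ∀ i, 0 < u i) (hw : ∀ i, 0 < w i)
    (hPu : P *ᵥ u = ρ • u) (hQw : Q *ᵥ w = σ • w) (hv : ∀ i, 0 < v i)
    (hvB : v ᵥ* weightedGeomMean s t P Q = (ρ ^ s * σ ^ t) • v) :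
    Q = (σ / ρ) • ((diagonal fun i => u i / w i)⁻¹ * P * diagonal fun i => u i / w i) := by
  set z : ι → ℝ := fun j => u j ^ s * w j ^ t
  have hPu' : ∀ i, ∑ j, P i j * u j = ρ * u i := fun i => congrFun hPu i
  have hQw' : ∀ i, ∑ j, Q i j * w j = σ * w i := fun i => congrFun hQw i
  have ha : ∀ i j, 0 ≤ P i j * u j := fun i j => mul_nonneg (hP i j) (hu j).le
  have hb : ∀ i j, 0 ≤ Q i j * w j := fun i j => mul_nonneg (hQ i j) (hw j).le
  have hA : ∀ i, 0 < ∑ j, P i j * u j := fun i => (hPu' i).symm ▸ mul_pos hρ (hu i)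
  have hB' : ∀ i, 0 < ∑ j, Q i j * w j := fun i => (hQw' i).symm ▸ mul_pos hσ (hw i)
  have hBz : ∀ i, (weightedGeomMean s t P Q *ᵥ z) i =
      ∑ j, (P i j * u j) ^ s * (Q i j * w j) ^ t := fun i =>
    sum_congr rfl fun j _ => by
      show P i j ^ s * Q i j ^ t * z j = _
      rw [Real.mul_rpow (hP i j) (hu j).le, Real.mul_rpow (hQ i j) (hw j).le]; ring
  have hsz : ∀ i, (∑ j, P i j * u j) ^ s * (∑ j, Q i j * w j) ^ t = ρ ^ s * σ ^ t * z i :=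
    fun i => by rw [hPu', hQw', Real.mul_rpow hρ.le (hu i).le, Real.mul_rpow hσ.le (hw i).le]; ring
  have hBz_eq : weightedGeomMean s t P Q *ᵥ z = (ρ ^ s * σ ^ t) • z :=
    mulVec_eq_smul_of_le_of_vecMul_eq_smul hv hvB fun i => by
      rw [hBz, ← hsz]; exact sum_rpow_mul_rpow_le (ha i) (hb i) (hA i) (hB' i) hs.le ht.le hst
  have hprop : ∀ i j, P i j * u j * (σ * w i) = Q i j * w j * (ρ * u i) := fun i j => by
    have := mul_sum_eq_mul_sum_of_sum_rpow_mul_rpow_eq (ha i) (hb i) (hA i) (hB' i) hs ht hst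
      (by rw [← hBz, hsz, hBz_eq]; rfl) j
    rwa [hPu', hQw'] at this
  rw [inv_diagonal_mul_mul_diagonal fun i => (div_pos (hu i) (hw i)).ne']
  ext i j
  simp only [smul_apply, of_apply, smul_eq_mul]
  have := (hu i).ne'
  have := (hu j).ne'
  have := (hw i).ne'
  have := (hw j).ne'
  field_simp
  linear_combination -hprop i j

end Matrix

section expDiag

variable {n : ℕ} {A : Matrix (Fin n) (Fin n) ℝ}

lemma expDiag_mul_apply (g : Fin n → ℝ) (A : Matrix (Fin n) (Fin n) ℝ) (i j : Fin n) :
    (expDiag g * A) i j = Real.exp (g i) * A i j := by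
  rw [expDiag, Matrix.diagonal_mul]

lemma expDiag_mul_nonneg (hA : ∀ i j, 0 ≤ A i j) (g : Fin n → ℝ) (i j : Fin n) :
    0 ≤ (expDiag g * A) i j := by
  rw [expDiag_mul_apply]
  exact mul_nonneg (Real.exp_pos _).le (hA i j)

lemma MatIrred.expDiag_mul (hA : ∀ i j, 0 ≤ A i j) (hirr : MatIrred A) (g : Fin n → ℝ) :
    MatIrred (expDiag g * A) :=
  hirr.diagonal_mul (fun _ => Real.exp_pos _) hA

lemma expDiag_add_mul_eq_weightedGeomMean (hA : ∀ i j, 0 ≤ A i j) {s t : ℝ} (hst : s + t = 1)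
    (C D : Fin n → ℝ) :
    expDiag (fun i => s * C i + t * D i) * A =
      Matrix.weightedGeomMean s t (expDiag C * A) (expDiag D * A) := by
  ext i j
  rw [Matrix.weightedGeomMean, Matrix.of_apply, expDiag_mul_apply, expDiag_mul_apply,
    expDiag_mul_apply, Real.mul_rpow (Real.exp_pos _).le (hA i j),
    Real.mul_rpow (Real.exp_pos _).le (hA i j), ← Real.exp_mul, ← Real.exp_mul, Real.exp_add,
    mul_comm (C i), mul_comm (D i)]
  linear_combination (-(Real.exp (s * C i) * Real.exp (t * D i))) *
    Real.rpow_mul_rpow_self_of_add_eq_one (hA i j) hst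

variable [NeZero n] (hA : ∀ i j, 0 ≤ A i j) (hirr : MatIrred A) {C D : Fin n → ℝ} {s t : ℝ}
include hA hirr

theorem log_specRad_expDiag_add_mul_eq {α : ℝ} {E : Fin n → ℝ} (hα : 0 < α)
    (hE : ∀ i, 0 < E i)
    (hCD : expDiag D * A = α • ((Matrix.diagonal E)⁻¹ * (expDiag C * A) * Matrix.diagonal E))
    (hst : s + t = 1) :
    Real.log (specRad (expDiag (fun i => s * C i + t * D i) * A)) =
      s * Real.log (specRad (expDiag C * A)) + t * Real.log (specRad (expDiag D * A)) := by
  have hN := expDiag_mul_nonneg hA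
  have hI := hirr.expDiag_mul hA
  obtain ⟨u, hu, hPu⟩ := (hI C).exists_pos_mulVec_eq_specRad_smul (hN C)
  have hρ := (hI C).specRad_pos (hN C)
  have hQ : specRad (expDiag D * A) = α * specRad (expDiag C * A) :=
    (hI D).specRad_eq_of_mulVec_eq_smul (hN D) (fun i => mul_pos (inv_pos.2 (hE i)) (hu i))
      (by rw [hCD]; exact Matrix.smul_diagonal_conj_mulVec (fun i => (hE i).ne') hPu)
  have hB : specRad (expDiag (fun i => s * C i + t * D i) * A) =
      α ^ t * specRad (expDiag C * A) := by
    have hE' : ∀ i, 0 < E i ^ t := fun i => Real.rpow_pos_of_pos (hE i) t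
    refine (hI _).specRad_eq_of_mulVec_eq_smul (hN _)
      (fun i => mul_pos (inv_pos.2 (hE' i)) (hu i)) ?_
    rw [expDiag_add_mul_eq_weightedGeomMean hA hst, hCD,
      Matrix.weightedGeomMean_smul_diagonal_conj (hN C) hst hα hE]
    exact Matrix.smul_diagonal_conj_mulVec (fun i => (hE' i).ne') hPu
  rw [hQ, hB, Real.log_mul (Real.rpow_pos_of_pos hα t).ne' hρ.ne', Real.log_mul hα.ne' hρ.ne',
    Real.log_rpow hα]
  linear_combination (-Real.log (specRad (expDiag C * A))) * hst

theorem exists_smul_diagonal_conj_of_log_specRad_eq (hs : 0 < s) (ht : 0 < t) (hst : s + t = 1)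
    (h : Real.log (specRad (expDiag (fun i => s * C i + t * D i) * A)) =
      s * Real.log (specRad (expDiag C * A)) + t * Real.log (specRad (expDiag D * A))) :
    ∃ α : ℝ, 0 < α ∧ ∃ E : Fin n → ℝ, (∀ i, 0 < E i) ∧
      expDiag D * A = α • ((Matrix.diagonal E)⁻¹ * (expDiag C * A) * Matrix.diagonal E) := by
  have hN := expDiag_mul_nonneg hA
  have hI := hirr.expDiag_mul hA
  obtain ⟨u, hu, hPu⟩ := (hI C).exists_pos_mulVec_eq_specRad_smul (hN C)
  obtain ⟨w, hw, hQw⟩ := (hI D).exists_pos_mulVec_eq_specRad_smul (hN D)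
  obtain ⟨v, hv, hvB⟩ := (hI _).exists_pos_vecMul_eq_specRad_smul (hN fun i => s * C i + t * D i)
  have hρ := (hI C).specRad_pos (hN C)
  have hσ := (hI D).specRad_pos (hN D)
  have hB : specRad (expDiag (fun i => s * C i + t * D i) * A) =
      specRad (expDiag C * A) ^ s * specRad (expDiag D * A) ^ t := by
    rw [← Real.exp_log ((hI _).specRad_pos (hN _)), h, Real.exp_add, Real.rpow_def_of_pos hρ,
      Real.rpow_def_of_pos hσ, mul_comm s, mul_comm t]
  rw [hB, expDiag_add_mul_eq_weightedGeomMean hA hst] at hvB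
  exact ⟨_, div_pos hσ hρ, _, fun i => div_pos (hu i) (hw i),
    Matrix.eq_smul_diagonal_conj_of_vecMul_weightedGeomMean (hN C) (hN D) hs ht hst hρ hσ hu hw
      hPu hQw hv hvB⟩

end expDiag

theorem stmt4 {n : ℕ} (A : Matrix (Fin n) (Fin n) ℝ)
    (hA : ∀ i j, 0 ≤ A i j) (hAirr : MatIrred A)
    (C D : Fin n → ℝ) :
    (∃ t ∈ Set.Ioo (0:ℝ) 1,
        Real.log (specRad (expDiag (fun i => (1 - t) * C i + t * D i) * A)) =
          (1 - t) * Real.log (specRad (expDiag C * A)) +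
            t * Real.log (specRad (expDiag D * A))) ↔
      ∃ α : ℝ, 0 < α ∧ ∃ E : Fin n → ℝ, (∀ i, 0 < E i) ∧
        expDiag D * A = α • ((Matrix.diagonal E)⁻¹ * (expDiag C * A) * Matrix.diagonal E) := by
  obtain _ | n := n
  · have h0 : ∀ M N : Matrix (Fin 0) (Fin 0) ℝ, M = N := fun _ _ => Matrix.ext fun i => i.elim0
    refine ⟨fun _ => ⟨1, one_pos, 1, fun i => i.elim0, h0 _ _⟩, fun _ => ⟨1 / 2, by norm_num, ?_⟩⟩
    rw [h0 (expDiag D * A) (expDiag C * A), h0 (expDiag _ * A) (expDiag C * A)]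
    ring
  constructor
  · rintro ⟨t, ⟨ht0, ht1⟩, h⟩
    exact exists_smul_diagonal_conj_of_log_specRad_eq hA hAirr (sub_pos.2 ht1) ht0
      (sub_add_cancel 1 t) h
  · rintro ⟨α, hα, E, hE, hCD⟩
    exact ⟨1 / 2, by norm_num, log_specRad_expDiag_add_mul_eq hA hAirr hα hE hCD
      (sub_add_cancel 1 _)⟩
end
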